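/- arXiv:2604.04146 — 2 statements merged into one kernel-verified Lean document; each statement's English description precedes it below -/
import Mathlib

section
/- For every integer N ≥ 1 and every real number q with 0 < q < 1, ∏_{1≤i<j≤N} (q^{2j} − q^{2i}) · ∏_{1≤i<j≤N+1} (q^{2j−1} − q^{2i−1}) = (−1)^N · q^{binom(N+1,2) + 4·binom(N+1,3)} · H_{q²}(N) · H_{q²}(N+1). -/
open scoped Classical

/-- The shifted q-factorial `(a;q)_k = (1-a)(1-aq)⋯(1-aq^{k-1})`. -/
noncomputable def qPoch (a q : ℝ) (k : ℕ) : ℝ := ∏ i ∈ Finset.range k, (1 - a * q ^ i)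

/-- The hyper q-shifted factor `H_q(n) = ∏_{k=1}^{n-1} (q;q)_k`. -/
noncomputable def Hq (q : ℝ) (n : ℕ) : ℝ := ∏ k ∈ Finset.range n, qPoch q q k

private lemma filter_lt_Icc (n i : ℕ) :
    (Finset.Icc 1 n).filter (fun j => i < j) = Finset.Icc (i + 1) n := by
  ext j; simp [Finset.mem_filter]; omega

private lemma split_prod (M : ℕ) (f : ℕ → ℕ → ℝ) :
    (∏ i ∈ Finset.Icc 1 (M+1), ∏ j ∈ (Finset.Icc 1 (M+1)).filter (fun j => i < j), f i j)
      = (∏ i ∈ Finset.Icc 1 M, ∏ j ∈ (Finset.Icc 1 M).filter (fun j => i < j), f i j)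
        * ∏ i ∈ Finset.Icc 1 M, f i (M+1) := by
  rw [Finset.prod_Icc_succ_top (by omega : 1 ≤ M + 1)]
  have h1 : (Finset.Icc 1 (M+1)).filter (fun j => M+1 < j) = ∅ := by
    ext j; simp
  rw [h1, Finset.prod_empty, mul_one, ← Finset.prod_mul_distrib]
  apply Finset.prod_congr rfl
  intro i hi
  simp only [Finset.mem_Icc] at hi
  rw [filter_lt_Icc, filter_lt_Icc, Finset.prod_Icc_succ_top (by omega : i + 1 ≤ M + 1)]

private lemma qPoch_Icc (b : ℝ) (M : ℕ) :
    qPoch b b M = ∏ i ∈ Finset.Icc 1 M, (1 - b ^ i) := by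
  induction M with
  | zero => simp [qPoch]
  | succ n ih =>
      rw [qPoch, Finset.prod_range_succ, ← qPoch, ih,
        Finset.prod_Icc_succ_top (by omega : 1 ≤ n + 1)]
      congr 1
      rw [pow_succ']

private lemma prod_Icc_reflect (M : ℕ) (f : ℕ → ℝ) :
    ∏ i ∈ Finset.Icc 1 M, f (M + 1 - i) = ∏ i ∈ Finset.Icc 1 M, f i := by
  refine Finset.prod_nbij' (fun i => M + 1 - i) (fun i => M + 1 - i) ?_ ?_ ?_ ?_ ?_ <;>
    simp only [Finset.mem_Icc] <;> intro a ha <;> first | trivial | omega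

private lemma refl_prod (b : ℝ) (M : ℕ) :
    ∏ i ∈ Finset.Icc 1 M, (1 - b ^ (M + 1 - i)) = qPoch b b M := by
  rw [qPoch_Icc, ← prod_Icc_reflect M (fun i => 1 - b ^ i)]

private lemma neg_prod (M : ℕ) (c : ℕ → ℝ) :
    ∏ i ∈ Finset.Icc 1 M, (-(c i)) = (-1:ℝ)^M * ∏ i ∈ Finset.Icc 1 M, c i := by
  calc ∏ i ∈ Finset.Icc 1 M, (-(c i)) = ∏ i ∈ Finset.Icc 1 M, ((-1) * c i) := by
        apply Finset.prod_congr rfl; intros; ring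
    _ = (∏ _i ∈ Finset.Icc 1 M, (-1:ℝ)) * ∏ i ∈ Finset.Icc 1 M, c i :=
        Finset.prod_mul_distrib
    _ = (-1:ℝ)^M * ∏ i ∈ Finset.Icc 1 M, c i := by
        rw [Finset.prod_const, Nat.card_Icc]; norm_num

private lemma sum_two_mul (M : ℕ) : ∑ i ∈ Finset.Icc 1 M, 2 * i = M * (M + 1) := by
  induction M with
  | zero => simp
  | succ n ih => rw [Finset.sum_Icc_succ_top (by omega), ih]; ring

private lemma sum_odd (M : ℕ) : ∑ i ∈ Finset.Icc 1 M, (2 * i - 1) = M * M := by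
  induction M with
  | zero => simp
  | succ n ih =>
      rw [Finset.sum_Icc_succ_top (by omega), ih,
        show 2 * (n + 1) - 1 = 2 * n + 1 from by omega]
      ring

private lemma even_col (q : ℝ) (N : ℕ) :
    ∏ i ∈ Finset.Icc 1 N, (q ^ (2 * (N+1)) - q ^ (2 * i))
      = (-1:ℝ)^N * q ^ (N * (N+1)) * qPoch (q^2) (q^2) N := by
  have h : ∀ i ∈ Finset.Icc 1 N, q ^ (2*(N+1)) - q ^ (2*i)
      = -(q ^ (2*i)) * (1 - (q^2) ^ (N+1-i)) := by
    intro i hi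
    simp only [Finset.mem_Icc] at hi
    have h2 : q ^ (2*i) * (q^2) ^ (N+1-i) = q ^ (2*(N+1)) := by
      rw [← pow_mul, ← pow_add]; congr 1; omega
    linear_combination -h2
  rw [Finset.prod_congr rfl h, Finset.prod_mul_distrib, neg_prod,
    Finset.prod_pow_eq_pow_sum, sum_two_mul, refl_prod]

private lemma odd_col (q : ℝ) (N : ℕ) :
    ∏ i ∈ Finset.Icc 1 (N+1), (q ^ (2 * (N+1+1) - 1) - q ^ (2 * i - 1))
      = (-1:ℝ)^(N+1) * q ^ ((N+1) * (N+1)) * qPoch (q^2) (q^2) (N+1) := by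
  have h : ∀ i ∈ Finset.Icc 1 (N+1), q ^ (2*(N+1+1)-1) - q ^ (2*i-1)
      = -(q ^ (2*i-1)) * (1 - (q^2) ^ (N+1+1-i)) := by
    intro i hi
    simp only [Finset.mem_Icc] at hi
    have h2 : q ^ (2*i-1) * (q^2) ^ (N+1+1-i) = q ^ (2*(N+1+1)-1) := by
      rw [← pow_mul, ← pow_add]; congr 1; omega
    linear_combination -h2
  rw [Finset.prod_congr rfl h, Finset.prod_mul_distrib, neg_prod,
    Finset.prod_pow_eq_pow_sum, sum_odd, refl_prod]

private lemma Hq_succ (b : ℝ) (n : ℕ) : Hq b (n+1) = Hq b n * qPoch b b n := by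
  rw [Hq, Finset.prod_range_succ, ← Hq]

private lemma choose_two (m : ℕ) : 2 * Nat.choose (m+1) 2 = (m+1) * m := by
  induction m with
  | zero => rfl
  | succ n ih =>
      rw [Nat.choose_succ_succ (n+1) 1, Nat.mul_add, ih, Nat.choose_one_right]
      ring

theorem even_odd_vandermonde_product_odd_case (N : ℕ) (hN : 1 ≤ N)
    (q : ℝ) (hq0 : 0 < q) (hq1 : q < 1) :
    (∏ i ∈ Finset.Icc 1 N, ∏ j ∈ (Finset.Icc 1 N).filter (fun j => i < j),
        (q ^ (2 * j) - q ^ (2 * i))) *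
      (∏ i ∈ Finset.Icc 1 (N + 1), ∏ j ∈ (Finset.Icc 1 (N + 1)).filter (fun j => i < j),
        (q ^ (2 * j - 1) - q ^ (2 * i - 1)))
      = (-1 : ℝ) ^ N * q ^ (Nat.choose (N + 1) 2 + 4 * Nat.choose (N + 1) 3) *
        Hq (q ^ 2) N * Hq (q ^ 2) (N + 1) := by
  induction N, hN using Nat.le_induction with
  | base =>
      simp only [filter_lt_Icc]
      norm_num [Finset.Icc_self, Hq, qPoch, Finset.prod_range_succ,
        show Finset.Icc (2:ℕ) 1 = ∅ from rfl, show Finset.Icc (1:ℕ) 2 = {1, 2} from rfl,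
        show Finset.Icc (2:ℕ) 2 = {2} from rfl, show Finset.Icc (3:ℕ) 2 = ∅ from rfl]
      ring
  | succ n hn ih =>
      rw [split_prod n (fun i j => q ^ (2 * j) - q ^ (2 * i)),
        split_prod (n+1) (fun i j => q ^ (2 * j - 1) - q ^ (2 * i - 1)),
        even_col, odd_col, mul_mul_mul_comm, ih,
        Hq_succ (q^2) (n+1), Hq_succ (q^2) n]
      have hexp : Nat.choose (n + 1) 2 + 4 * Nat.choose (n + 1) 3
          + (n * (n+1) + (n+1) * (n+1))
          = Nat.choose (n + 1 + 1) 2 + 4 * Nat.choose (n + 1 + 1) 3 := by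
        rw [Nat.choose_succ_succ (n+1) 1, Nat.choose_succ_succ (n+1) 2,
          Nat.choose_one_right]
        have h2 := choose_two n
        have h3 : (n+1) * (n+1) = n * (n+1) + (n+1) := by ring
        have h4 : n * (n+1) = (n+1) * n := by ring
        have h5 : (n+1).choose (Nat.succ 1) = (n+1).choose 2 := rfl
        have h6 : (n+1).choose (Nat.succ 2) = (n+1).choose 3 := rfl
        rw [h5, h6]
        omega
      have hpow : q ^ (Nat.choose (n + 1 + 1) 2 + 4 * Nat.choose (n + 1 + 1) 3)
          = q ^ (Nat.choose (n + 1) 2 + 4 * Nat.choose (n + 1) 3)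
            * (q ^ (n * (n+1)) * q ^ ((n+1) * (n+1))) := by
        rw [← pow_add, ← pow_add, hexp]
      have hA : ((-1:ℝ))^(n+1) = (-1)^n * (-1) := by rw [pow_succ]
      rw [hpow, hA]
      have hs : ((-1:ℝ))^n * (-1)^n = 1 := by rw [← mul_pow]; norm_num
      linear_combination (-((-1:ℝ)^n * q ^ (Nat.choose (n + 1) 2 + 4 * Nat.choose (n + 1) 3)
        * q ^ (n * (n+1)) * q ^ ((n+1) * (n+1)) * Hq (q ^ 2) n * Hq (q ^ 2) n
        * qPoch (q ^ 2) (q ^ 2) n * qPoch (q ^ 2) (q ^ 2) n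
        * qPoch (q ^ 2) (q ^ 2) (n + 1))) * hs
end

section
/- Let m ≥ 1 and s ≥ 0 be integers, let 1 ≤ k_1 < k_2 < ⋯ < k_s ≤ m+s be integers, and let q be a real number with 0 < q < 1. Let E := {2, 4, …, 2m+2s} and O := {1, 3, …, 2m+2s−1} be the sets of even and odd numbers in [2m+2s], and set C := E ∖ {2k_1, …, 2k_s} and D := O ∪ {2k_1, …, 2k_s}. Then ▲(C) · ▲(D) = ▲(E) · ▲(O) · ∏_{1≤i<j≤s} (q^{2k_j} − q^{2k_i})² · ∏_{i=1}^{s} q^{k_i} · (q−1) · (q³;q²)_{k_i−1} · (q;q²)_{m+s−k_i} / ((q²;q²)_{k_i−1} · (q²;q²)_{m+s−k_i}). -/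
open scoped Classical

/-- `▲(U) = ∏_{u < v in U} (q^v - q^u)`. -/
noncomputable def vand (q : ℝ) (U : Finset ℕ) : ℝ :=
  ∏ u ∈ U, ∏ v ∈ U.filter (fun v => u < v), (q ^ v - q ^ u)

/-!
Write `E`, `O` for the even and odd numbers up to `2(m+s)` and `K = {2k₁, …, 2kₛ}`. For disjoint
`A`, `B` one has `▲(A ∪ B) = ▲(A) ▲(B) X(A, B)`, with `X` the product of the factors
`q^max - q^min` over pairs across `A` and `B`. Applied to `O ∪ K` and `(E ∖ K) ∪ K`, this reduces
the identity to comparing `X(O, K)` with `X(E ∖ K, K)`. Adding the pairs inside `K`, which give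
`▲(K)²`, to the latter, the comparison splits into one identity per `b = 2κ ∈ K`: the factors
pairing `b` with all odd numbers against those pairing `b` with the other even numbers. Splitting
each product at `b`, both are explicit q-Pochhammer symbols.
-/

open Finset

section

variable (q : ℝ)

noncomputable def vandFactor (a b : ℕ) : ℝ := q ^ max a b - q ^ min a b

noncomputable def vandCross (A B : Finset ℕ) : ℝ := ∏ b ∈ B, ∏ a ∈ A, vandFactor q a b

lemma prod_vandFactor_eq {ι : Type*} (S : Finset ι) (e : ι → ℕ) (b : ℕ)
    (hb : ∀ j ∈ S, e j ≠ b) :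
    ∏ j ∈ S, vandFactor q (e j) b =
      (∏ j ∈ S.filter (fun j => e j < b), (q ^ b - q ^ e j)) *
        ∏ j ∈ S.filter (fun j => b < e j), (q ^ e j - q ^ b) := by
  rw [← prod_filter_mul_prod_filter_not S (fun j => e j < b)]
  have hnot : S.filter (fun j => ¬ e j < b) = S.filter (fun j => b < e j) :=
    filter_congr fun j hj => by have := hb j hj; omega
  rw [hnot]
  congr 1 <;> refine prod_congr rfl fun j hj => ?_ <;> rw [mem_filter] at hj
  · rw [vandFactor, max_eq_right hj.2.le, min_eq_left hj.2.le]
  · rw [vandFactor, max_eq_left hj.2.le, min_eq_right hj.2.le]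

lemma vand_union {A B : Finset ℕ} (hAB : Disjoint A B) :
    vand q (A ∪ B) = vand q A * vand q B * vandCross q A B := by
  have hsplit : ∀ C : Finset ℕ,
      ∏ u ∈ C, ∏ v ∈ (A ∪ B).filter (fun v => u < v), (q ^ v - q ^ u) =
        (∏ u ∈ C, ∏ v ∈ A.filter (fun v => u < v), (q ^ v - q ^ u)) *
          ∏ u ∈ C, ∏ v ∈ B.filter (fun v => u < v), (q ^ v - q ^ u) := fun C => by
    rw [← prod_mul_distrib]
    exact prod_congr rfl fun u _ => by
      rw [filter_union, prod_union (disjoint_filter_filter hAB)]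
  have hcross : vandCross q A B =
      (∏ u ∈ A, ∏ v ∈ B.filter (fun v => u < v), (q ^ v - q ^ u)) *
        ∏ u ∈ B, ∏ v ∈ A.filter (fun v => u < v), (q ^ v - q ^ u) := by
    have hswap : ∏ u ∈ A, ∏ v ∈ B.filter (fun v => u < v), (q ^ v - q ^ u) =
        ∏ b ∈ B, ∏ a ∈ A.filter (fun a => a < b), (q ^ b - q ^ a) :=
      prod_comm' fun u v => by simp only [mem_filter]; tauto
    rw [vandCross, hswap, ← prod_mul_distrib]
    exact prod_congr rfl fun b hb =>
      prod_vandFactor_eq q A id b fun a ha => ne_of_mem_of_not_mem ha (disjoint_right.mp hAB hb)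
  rw [vand, prod_union hAB, hsplit, hsplit, hcross, vand, vand]
  ring

lemma vand_sq (K : Finset ℕ) :
    vand q K ^ 2 = ∏ b ∈ K, ∏ a ∈ K.erase b, vandFactor q a b := by
  have hsplit : ∀ b ∈ K, ∏ a ∈ K.erase b, vandFactor q a b =
      (∏ a ∈ K.filter (fun a => a < b), (q ^ b - q ^ a)) *
        ∏ a ∈ K.filter (fun a => b < a), (q ^ a - q ^ b) := fun b _ => by
    refine (prod_vandFactor_eq q (K.erase b) id b fun a ha => ne_of_mem_erase ha).trans ?_
    simp only [id, filter_erase]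
    rw [erase_eq_of_notMem (by simp), erase_eq_of_notMem (by simp)]
  have hswap : ∏ b ∈ K, ∏ a ∈ K.filter (fun a => a < b), (q ^ b - q ^ a) = vand q K :=
    prod_comm' fun b a => by simp only [mem_filter]; tauto
  rw [prod_congr rfl hsplit, prod_mul_distrib, hswap, vand, sq]

lemma vandCross_sdiff_mul_vand_sq {E K : Finset ℕ} (hKE : K ⊆ E) :
    vandCross q (E \ K) K * vand q K ^ 2 = ∏ b ∈ K, ∏ a ∈ E.erase b, vandFactor q a b := by
  rw [vand_sq, vandCross, ← prod_mul_distrib]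
  refine prod_congr rfl fun b hb => ?_
  have hE : E.erase b = (E \ K) ∪ K.erase b := by
    ext a
    simp only [mem_erase, mem_sdiff, mem_union]
    constructor
    · rintro ⟨hab, haE⟩
      by_cases haK : a ∈ K
      exacts [Or.inr ⟨hab, haK⟩, Or.inl ⟨haE, haK⟩]
    · rintro (⟨haE, haK⟩ | ⟨hab, haK⟩)
      exacts [⟨fun h => haK (h ▸ hb), haE⟩, ⟨hab, hKE haK⟩]
  rw [hE, prod_union (disjoint_sdiff_self_left.mono_right (erase_subset b K))]

lemma vand_image_of_strictMonoOn {S : Finset ℕ} {g : ℕ → ℕ}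
    (hg : StrictMonoOn g S) :
    vand q (S.image g) = ∏ i ∈ S, ∏ j ∈ S.filter (fun j => i < j), (q ^ g j - q ^ g i) := by
  rw [vand, prod_image hg.injOn]
  refine prod_congr rfl fun i hi => ?_
  rw [filter_image, prod_image (hg.injOn.mono (filter_subset _ _))]
  refine prod_congr (filter_congr fun j hj => hg.lt_iff_lt hi hj) fun _ _ => rfl

lemma qPoch_succ (a p : ℝ) (n : ℕ) : qPoch a p (n + 1) = (1 - a) * qPoch (a * p) p n := by
  simp only [qPoch, prod_range_succ', pow_zero, mul_one, pow_succ]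
  rw [mul_comm]
  congr 1
  exact prod_congr rfl fun i _ => by ring

lemma qPoch_pos {a p : ℝ} (ha0 : 0 ≤ a) (ha1 : a < 1) (hp0 : 0 ≤ p) (hp1 : p ≤ 1) (n : ℕ) :
    0 < qPoch a p n :=
  prod_pos fun _ _ => sub_pos.mpr <|
    (mul_le_of_le_one_right ha0 (pow_le_one₀ hp0 hp1)).trans_lt ha1

lemma sum_range_two_mul_add (n r : ℕ) (hr : 1 ≤ r) :
    ∑ t ∈ range n, (2 * t + r) = n * (n + r - 1) := by
  obtain ⟨r, rfl⟩ : ∃ r', r = r' + 1 := ⟨r - 1, by omega⟩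
  induction n with
  | zero => simp
  | succ n ih =>
    rw [sum_range_succ, ih, show n + (r + 1) - 1 = n + r by omega,
      show n + 1 + (r + 1) - 1 = n + 1 + r by omega]
    ring

lemma prod_range_pow_sub_pow {n r b : ℕ} (hr : 1 ≤ r) (hb : b + 2 = 2 * n + 2 * r) :
    ∏ t ∈ range n, (q ^ b - q ^ (2 * t + r)) =
      (-1) ^ n * q ^ (n * (n + r - 1)) * qPoch (q ^ r) (q ^ 2) n := by
  have hfactor : ∀ t ∈ range n, q ^ b - q ^ (2 * t + r) =
      -q ^ (2 * t + r) * (1 - q ^ r * (q ^ 2) ^ (n - 1 - t)) := fun t ht => by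
    rw [mem_range] at ht
    rw [show b = 2 * t + r + (2 * (n - 1 - t) + r) by omega, pow_add, pow_add, pow_mul]
    ring
  rw [prod_congr rfl hfactor, prod_mul_distrib, prod_neg, card_range, prod_pow_eq_pow_sum,
    sum_range_two_mul_add n r hr, qPoch,
    prod_range_reflect (fun t => 1 - q ^ r * (q ^ 2) ^ t) n]

lemma prod_range_pow_add_sub_pow (n r b : ℕ) :
    ∏ t ∈ range n, (q ^ (b + (2 * t + r)) - q ^ b) = (-q ^ b) ^ n * qPoch (q ^ r) (q ^ 2) n := by
  rw [qPoch, pow_eq_prod_const (-q ^ b) n, ← prod_mul_distrib]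
  exact prod_congr rfl fun t _ => by ring

lemma prod_vandFactor_odds (c n : ℕ) :
    ∏ a ∈ (Icc 1 (c + 1 + n)).image (fun i => 2 * i - 1), vandFactor q a (2 * (c + 1)) =
      (∏ t ∈ range (c + 1), (q ^ (2 * (c + 1)) - q ^ (2 * t + 1))) *
        ∏ t ∈ range n, (q ^ (2 * (c + 1) + (2 * t + 1)) - q ^ (2 * (c + 1))) := by
  rw [prod_image fun i hi j hj h => by simp only [coe_Icc, Set.mem_Icc] at hi hj h; omega,
    prod_vandFactor_eq _ _ _ _ fun j hj => by omega]
  rw [show (Icc 1 (c + 1 + n)).filter (fun j => 2 * j - 1 < 2 * (c + 1)) = Ico 1 (c + 2) by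
      ext j; simp only [mem_filter, mem_Icc, mem_Ico]; omega,
    show (Icc 1 (c + 1 + n)).filter (fun j => 2 * (c + 1) < 2 * j - 1) =
      Ico (c + 2) (c + 2 + n) by
      ext j; simp only [mem_filter, mem_Icc, mem_Ico]; omega,
    prod_Ico_eq_prod_range, prod_Ico_eq_prod_range, show c + 2 - 1 = c + 1 by omega,
    show c + 2 + n - (c + 2) = n by omega]
  congr 1 <;> refine prod_congr rfl fun t _ => ?_
  · rw [show 2 * (1 + t) - 1 = 2 * t + 1 by omega]
  · rw [show 2 * (c + 2 + t) - 1 = 2 * (c + 1) + (2 * t + 1) by omega]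

lemma prod_vandFactor_evens_erase (c n : ℕ) :
    ∏ a ∈ ((Icc 1 (c + 1 + n)).image (fun i => 2 * i)).erase (2 * (c + 1)),
        vandFactor q a (2 * (c + 1)) =
      (∏ t ∈ range c, (q ^ (2 * (c + 1)) - q ^ (2 * t + 2))) *
        ∏ t ∈ range n, (q ^ (2 * (c + 1) + (2 * t + 2)) - q ^ (2 * (c + 1))) := by
  have hinj : Function.Injective (fun i : ℕ => 2 * i) := fun i j h => by simp only at h; omega
  rw [← image_erase hinj, prod_image hinj.injOn,
    prod_vandFactor_eq _ _ _ _ fun j hj => by simp only [mem_erase] at hj; omega]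
  rw [show ((Icc 1 (c + 1 + n)).erase (c + 1)).filter (fun j => 2 * j < 2 * (c + 1)) =
      Ico 1 (c + 1) by
      ext j; simp only [mem_filter, mem_erase, mem_Icc, mem_Ico]; omega,
    show ((Icc 1 (c + 1 + n)).erase (c + 1)).filter (fun j => 2 * (c + 1) < 2 * j) =
      Ico (c + 2) (c + 2 + n) by
      ext j; simp only [mem_filter, mem_erase, mem_Icc, mem_Ico]; omega,
    prod_Ico_eq_prod_range, prod_Ico_eq_prod_range, show c + 1 - 1 = c by omega,
    show c + 2 + n - (c + 2) = n by omega]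
  congr 1 <;> refine prod_congr rfl fun t _ => ?_
  · rw [show 2 * (1 + t) = 2 * t + 2 by omega]
  · rw [show 2 * (c + 2 + t) = 2 * (c + 1) + (2 * t + 2) by omega]

lemma prod_vandFactor_odds_mul_qPoch {N κ : ℕ} (h1 : 1 ≤ κ) (h2 : κ ≤ N) :
    (∏ a ∈ (Icc 1 N).image (fun i => 2 * i - 1), vandFactor q a (2 * κ)) *
        (qPoch (q ^ 2) (q ^ 2) (κ - 1) * qPoch (q ^ 2) (q ^ 2) (N - κ)) =
      (∏ a ∈ ((Icc 1 N).image (fun i => 2 * i)).erase (2 * κ), vandFactor q a (2 * κ)) *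
        (q ^ κ * (q - 1) * qPoch (q ^ 3) (q ^ 2) (κ - 1) * qPoch q (q ^ 2) (N - κ)) := by
  obtain ⟨c, rfl⟩ : ∃ c, κ = c + 1 := ⟨κ - 1, by omega⟩
  obtain ⟨n, rfl⟩ : ∃ n, N = c + 1 + n := ⟨N - (c + 1), by omega⟩
  rw [prod_vandFactor_odds, prod_vandFactor_evens_erase,
    prod_range_pow_sub_pow q le_rfl (by omega), prod_range_pow_sub_pow q one_le_two (by omega),
    prod_range_pow_add_sub_pow, prod_range_pow_add_sub_pow, qPoch_succ, pow_one,
    show q * q ^ 2 = q ^ 3 by ring, show c + 1 - 1 = c by omega,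
    show c + 1 + n - (c + 1) = n by omega, show c + 1 + 1 - 1 = c + 1 by omega,
    show c + 2 - 1 = c + 1 by omega]
  ring

end

theorem triangle_product_even_case_general (m s : ℕ)
    (k : ℕ → ℕ)
    (hk : ∀ i ∈ Finset.Icc 1 s, 1 ≤ k i ∧ k i ≤ m + s)
    (hkmono : ∀ i ∈ Finset.Icc 1 s, ∀ j ∈ Finset.Icc 1 s, i < j → k i < k j)
    (q : ℝ) (hq0 : 0 < q) (hq1 : q < 1) :
    vand q (((Finset.Icc 1 (m + s)).image (fun i => 2 * i)) \
        ((Finset.Icc 1 s).image (fun i => 2 * k i))) *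
      vand q (((Finset.Icc 1 (m + s)).image (fun i => 2 * i - 1)) ∪
        ((Finset.Icc 1 s).image (fun i => 2 * k i)))
      = vand q ((Finset.Icc 1 (m + s)).image (fun i => 2 * i)) *
        vand q ((Finset.Icc 1 (m + s)).image (fun i => 2 * i - 1)) *
        (∏ i ∈ Finset.Icc 1 s, ∏ j ∈ (Finset.Icc 1 s).filter (fun j => i < j),
          (q ^ (2 * k j) - q ^ (2 * k i)) ^ 2) *
        ∏ i ∈ Finset.Icc 1 s,
          q ^ (k i) * (q - 1) * qPoch (q ^ 3) (q ^ 2) (k i - 1) *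
            qPoch q (q ^ 2) (m + s - k i) /
            (qPoch (q ^ 2) (q ^ 2) (k i - 1) * qPoch (q ^ 2) (q ^ 2) (m + s - k i)) := by
  set E := (Icc 1 (m + s)).image (fun i => 2 * i)
  set O := (Icc 1 (m + s)).image (fun i => 2 * i - 1)
  set K := (Icc 1 s).image (fun i => 2 * k i)
  have hmono : StrictMonoOn (fun i => 2 * k i) (Icc 1 s) := fun i hi j hj hij =>
    Nat.mul_lt_mul_of_pos_left (hkmono i hi j hj hij) two_pos
  have hKE : K ⊆ E :=
    image_subset_iff.mpr fun i hi => mem_image.mpr ⟨k i, mem_Icc.mpr (hk i hi), rfl⟩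
  have hOK : Disjoint O K := by
    simp only [O, K, disjoint_left, mem_image]
    rintro _ ⟨i, hi, rfl⟩ ⟨j, _, hj⟩
    have := (mem_Icc.mp hi).1
    omega
  have hsq : ∏ i ∈ Icc 1 s, ∏ j ∈ (Icc 1 s).filter (fun j => i < j),
      (q ^ (2 * k j) - q ^ (2 * k i)) ^ 2 = vand q K ^ 2 := by
    rw [vand_image_of_strictMonoOn q hmono]
    simp only [prod_pow]
  have hE : vand q E = vand q (E \ K) * vand q K * vandCross q (E \ K) K := by
    rw [← vand_union q sdiff_disjoint, sdiff_union_of_subset hKE]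
  have hq2 : q ^ 2 < 1 := pow_lt_one₀ hq0.le hq1 two_ne_zero
  have hpos : ∀ j, 0 < qPoch (q ^ 2) (q ^ 2) j := qPoch_pos (sq_nonneg q) hq2 (sq_nonneg q) hq2.le
  have hden : ∏ i ∈ Icc 1 s,
      (qPoch (q ^ 2) (q ^ 2) (k i - 1) * qPoch (q ^ 2) (q ^ 2) (m + s - k i)) ≠ 0 :=
    (prod_pos fun _ _ => mul_pos (hpos _) (hpos _)).ne'
  have hcross : vandCross q O K * ∏ i ∈ Icc 1 s,
        (qPoch (q ^ 2) (q ^ 2) (k i - 1) * qPoch (q ^ 2) (q ^ 2) (m + s - k i)) =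
      vandCross q (E \ K) K * vand q K ^ 2 * ∏ i ∈ Icc 1 s,
        (q ^ k i * (q - 1) * qPoch (q ^ 3) (q ^ 2) (k i - 1) * qPoch q (q ^ 2) (m + s - k i)) := by
    rw [vandCross_sdiff_mul_vand_sq q hKE, vandCross, prod_image hmono.injOn,
      prod_image hmono.injOn, ← prod_mul_distrib, ← prod_mul_distrib]
    exact prod_congr rfl fun i hi => prod_vandFactor_odds_mul_qPoch q (hk i hi).1 (hk i hi).2
  rw [hsq, hE, vand_union q hOK, prod_div_distrib, mul_div_assoc', eq_div_iff hden]
  linear_combination (vand q (E \ K) * vand q O * vand q K) * hcross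

theorem triangle_product_even_case (m s : ℕ) (hm : 1 ≤ m)
    (k : ℕ → ℕ)
    (hk : ∀ i ∈ Finset.Icc 1 s, 1 ≤ k i ∧ k i ≤ m + s)
    (hkmono : ∀ i ∈ Finset.Icc 1 s, ∀ j ∈ Finset.Icc 1 s, i < j → k i < k j)
    (q : ℝ) (hq0 : 0 < q) (hq1 : q < 1) :
    vand q (((Finset.Icc 1 (m + s)).image (fun i => 2 * i)) \
        ((Finset.Icc 1 s).image (fun i => 2 * k i))) *
      vand q (((Finset.Icc 1 (m + s)).image (fun i => 2 * i - 1)) ∪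
        ((Finset.Icc 1 s).image (fun i => 2 * k i)))
      = vand q ((Finset.Icc 1 (m + s)).image (fun i => 2 * i)) *
        vand q ((Finset.Icc 1 (m + s)).image (fun i => 2 * i - 1)) *
        (∏ i ∈ Finset.Icc 1 s, ∏ j ∈ (Finset.Icc 1 s).filter (fun j => i < j),
          (q ^ (2 * k j) - q ^ (2 * k i)) ^ 2) *
        ∏ i ∈ Finset.Icc 1 s,
          q ^ (k i) * (q - 1) * qPoch (q ^ 3) (q ^ 2) (k i - 1) *
            qPoch q (q ^ 2) (m + s - k i) /
            (qPoch (q ^ 2) (q ^ 2) (k i - 1) * qPoch (q ^ 2) (q ^ 2) (m + s - k i)) :=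
  triangle_product_even_case_general m s k hk hkmono q hq0 hq1
end
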